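/- arXiv:2110.14259 — 2 statements merged into one kernel-verified Lean document; each statement's English description precedes it below -/
import Mathlib

section
/- Let X be a Banach lattice of measurable functions in ℝ^n containing characteristic functions of balls. If all the Riesz transforms R_1,…,R_n are bounded on X, then sup over all balls B of |B|^{-1} ‖χ_B‖_X · ‖Mχ_B‖_{X'} < ∞, where M is the Hardy–Littlewood maximal operator and X' is the Köthe dual of X. -/
open MeasureTheory Metric Set ENNReal

noncomputable section

abbrev Euc (n : ℕ) := EuclideanSpace ℝ (Fin n)

/-- A Banach lattice of measurable functions on `ℝⁿ`, modeled through its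
(extended-real valued) norm functional. -/
structure BFL (n : ℕ) where
  N : (Euc n → ℝ) → ℝ≥0∞
  mono : ∀ f g : Euc n → ℝ, (∀ x, |g x| ≤ |f x|) → N g ≤ N f
  add_le : ∀ f g : Euc n → ℝ, N (f + g) ≤ N f + N g
  smul : ∀ (a : ℝ) (f : Euc n → ℝ), N (fun x => a * f x) = ENNReal.ofReal |a| * N f

/-- The Köthe dual norm of a Banach function lattice, evaluated on a
nonnegative (extended-real valued) function. -/
def kdual {n : ℕ} (X : BFL n) (g : Euc n → ℝ≥0∞) : ℝ≥0∞ :=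
  ⨆ (f : Euc n → ℝ) (_ : Measurable f ∧ X.N f ≤ 1), ∫⁻ x, ENNReal.ofReal |f x| * g x

/-- The Hardy–Littlewood maximal operator (uncentered, over balls). -/
def hlMax (n : ℕ) (g : Euc n → ℝ≥0∞) (y : Euc n) : ℝ≥0∞ :=
  ⨆ (c : Euc n) (r : ℝ) (_ : 0 < r ∧ y ∈ ball c r),
    (volume (ball c r))⁻¹ * ∫⁻ x in ball c r, g x

/-- The characteristic function of a ball, as a real valued function. -/
def chiR (n : ℕ) (c : Euc n) (r : ℝ) : Euc n → ℝ := (ball c r).indicator fun _ => (1 : ℝ)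

/-- The characteristic function of a ball, as an `ℝ≥0∞` valued function. -/
def chiE (n : ℕ) (c : Euc n) (r : ℝ) : Euc n → ℝ≥0∞ := (ball c r).indicator fun _ => (1 : ℝ≥0∞)

/-- `T` is bounded on `X` and is given, off the support, by integration against the
kernel of the `j`-th Riesz transform on bounded compactly supported functions. -/
def IsRieszOn (n : ℕ) (j : Fin n) (X : BFL n) (T : (Euc n → ℝ) → Euc n → ℝ) : Prop :=
  (∃ C : ℝ≥0∞, C < ⊤ ∧ ∀ f : Euc n → ℝ, X.N (T f) ≤ C * X.N f) ∧
  ∀ f : Euc n → ℝ, Measurable f → (∃ M : ℝ, ∀ x, |f x| ≤ M) → HasCompactSupport f →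
    ∀ x ∉ tsupport f, T f x = ∫ y, ((x j - y j) / ‖x - y‖ ^ ((n : ℝ) + 1)) * f y

/-!
Test against `f` with `‖f‖_X ≤ 1` and split `Mχ_B`, `B = B(c, r)`, into its part on `2nB`, where
`Mχ_B ≤ 1`, and its far part. Far from `B`, `Mχ_B(y) ≲ (r / |y - c|)ⁿ ≲ |R_j χ_B(y)|` for a
coordinate `j` in which `y - c` is large, because the Riesz kernel has a fixed sign there; by
antisymmetry of the kernel, `∫ h R_j χ_B = -∫ χ_B R_j h ≤ ‖R_j‖ ‖h‖_X ‖χ_B‖_{X'}`. Everything is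
thus controlled by `‖χ_{2nB}‖_X ‖χ_{2nB}‖_{X'}`, and `‖χ_B‖_X ‖χ_B‖_{X'} ≲ |B|` for every ball:
if `B'` is `B` translated by `3r` in direction `e_j`, the kernel of `R_j` has one sign and size
`≈ r⁻ⁿ` between `B` and `B'`, so `|R_j χ_{B'}| ≳ 1` on `B` and `|R_j h| ≳ |B|⁻¹ ∫ h` on `B'` for
`h ≥ 0` supported in `B`, whence `‖χ_B‖_X ≲ ‖χ_{B'}‖_X ≲ |B| ‖h‖_X / ∫ h`. Unbounded `f` are
reached by truncation and monotone convergence, since the kernel representation is only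
available for bounded compactly supported functions.
-/

theorem integrable_mul_of_support_subset_isCompact {α : Type*} [MeasurableSpace α]
    [TopologicalSpace α] [T2Space α] [OpensMeasurableSpace α] {μ : Measure α}
    [IsFiniteMeasureOnCompacts μ] {g k : α → ℝ} {s : Set α} {M L : ℝ}
    (hk : AEStronglyMeasurable k μ) (hg : AEStronglyMeasurable g μ) (hs : IsCompact s)
    (hgs : Function.support g ⊆ s) (hgM : ∀ x, |g x| ≤ M) (hkL : ∀ x ∈ s, |k x| ≤ L) :
    Integrable (fun x => k x * g x) μ := by
  refine (integrableOn_iff_integrable_of_support_subset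
    ((Function.support_mul_subset_right _ _).trans hgs)).1
    (Measure.integrableOn_of_bounded (M := L * M) hs.measure_lt_top.ne (hk.mul hg)
      (ae_restrict_of_forall_mem hs.isClosed.measurableSet fun x hx => ?_))
  rw [Real.norm_eq_abs, abs_mul]
  exact mul_le_mul (hkL x hx) (hgM x) (abs_nonneg _) ((abs_nonneg _).trans (hkL x hx))

theorem HasCompactSupport.integrable_of_bound {α : Type*} [MeasurableSpace α]
    [TopologicalSpace α] {μ : Measure α} [IsFiniteMeasureOnCompacts μ] {g : α → ℝ} {M : ℝ}
    (hgc : HasCompactSupport g) (hg : AEStronglyMeasurable g μ) (hgM : ∀ x, |g x| ≤ M) :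
    Integrable g μ :=
  memLp_one_iff_integrable.1 (hgc.memLp_of_bound hg M (ae_of_all _ hgM))

theorem mul_integral_le_abs_integral_mul {α : Type*} [MeasurableSpace α] {μ : Measure α}
    {g k : α → ℝ} {s m : ℝ} (hg : Integrable g μ) (hkg : Integrable (fun x => k x * g x) μ)
    (hg0 : ∀ x, 0 ≤ g x) (hs : |s| ≤ 1) (hk : ∀ x ∈ Function.support g, m ≤ s * k x) :
    m * ∫ x, g x ∂μ ≤ |∫ x, k x * g x ∂μ| := by
  have hpt : ∀ x, m * g x ≤ s * (k x * g x) := fun x => by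
    by_cases hx : g x = 0
    · simp [hx]
    · rw [← mul_assoc]
      exact mul_le_mul_of_nonneg_right (hk x hx) (hg0 x)
  calc m * ∫ x, g x ∂μ = ∫ x, m * g x ∂μ := (integral_const_mul m g).symm
    _ ≤ ∫ x, s * (k x * g x) ∂μ := integral_mono (hg.const_mul m) (hkg.const_mul s) hpt
    _ = s * ∫ x, k x * g x ∂μ := integral_const_mul s _
    _ ≤ |∫ x, k x * g x ∂μ| := by
      refine (le_abs_self _).trans ?_
      rw [abs_mul]
      exact mul_le_of_le_one_left (abs_nonneg _) hs

theorem exists_measurable_abs_le_one_mul_eq_abs {α : Type*} [MeasurableSpace α] {φ : α → ℝ}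
    (hφ : Measurable φ) :
    ∃ σ : α → ℝ, Measurable σ ∧ (∀ x, |σ x| ≤ 1) ∧ ∀ x, σ x * φ x = |φ x| := by
  refine ⟨fun x => φ x / |φ x|, hφ.div hφ.abs, fun x => ?_, fun x => ?_⟩
  · rw [abs_div, abs_abs]
    exact div_self_le_one _
  · rcases eq_or_ne (φ x) 0 with h | h
    · simp [h]
    · rw [div_mul_eq_mul_div, ← abs_mul_abs_self, mul_div_assoc, div_self (abs_ne_zero.2 h),
        mul_one]

theorem lintegral_indicator_le_of_truncations {E : Type*} [NormedAddCommGroup E] [ProperSpace E]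
    [MeasurableSpace E] [BorelSpace E] {μ : Measure E} {f : E → ℝ} (hf : Measurable f)
    {S : Set E} (hS : IsClosed S) {w : E → ℝ≥0∞} (hw : Measurable w) {C : ℝ≥0∞}
    (H : ∀ (h : E → ℝ) (M : ℝ), Measurable h → HasCompactSupport h → tsupport h ⊆ S →
      (∀ x, 0 ≤ h x) → (∀ x, |h x| ≤ |f x|) → (∀ x, |h x| ≤ M) →
      ∫⁻ x, ENNReal.ofReal (h x) * w x ∂μ ≤ C) :
    ∫⁻ x, S.indicator (fun x => ENNReal.ofReal |f x| * w x) x ∂μ ≤ C := by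
  set t : ℕ → E → ℝ := fun N => (S ∩ closedBall 0 N).indicator fun x => min |f x| N
  have ht0 (N : ℕ) (x : E) : 0 ≤ t N x :=
    indicator_nonneg (fun _ _ => le_min (abs_nonneg _) N.cast_nonneg) x
  have htf (N : ℕ) (x : E) : t N x ≤ |f x| :=
    indicator_le' (fun _ _ => min_le_left _ _) (fun _ _ => abs_nonneg _) x
  have htN (N : ℕ) (x : E) : t N x ≤ N :=
    indicator_le' (fun _ _ => min_le_right _ _) (fun _ _ => N.cast_nonneg) x
  have hsupp (N : ℕ) : tsupport (t N) ⊆ S ∩ closedBall 0 N :=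
    closure_minimal support_indicator_subset (hS.inter isClosed_closedBall)
  have hmeas (N : ℕ) : Measurable (t N) :=
    (hf.abs.min measurable_const).indicator (hS.measurableSet.inter measurableSet_closedBall)
  have hmono : Monotone fun N x => ENNReal.ofReal (t N x) * w x := by
    intro N N' hNN' x
    by_cases hx : x ∈ S ∩ closedBall 0 N
    · have hx' : x ∈ S ∩ closedBall 0 N' :=
        ⟨hx.1, closedBall_subset_closedBall (by exact_mod_cast hNN') hx.2⟩
      simp only [t, indicator_of_mem hx, indicator_of_mem hx']
      gcongr
    · simp only [t, indicator_of_notMem hx, ENNReal.ofReal_zero, zero_mul]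
      exact zero_le
  have hsup (x : E) : S.indicator (fun x => ENNReal.ofReal |f x| * w x) x =
      ⨆ N : ℕ, ENNReal.ofReal (t N x) * w x := by
    by_cases hx : x ∈ S
    · refine le_antisymm ?_ (iSup_le fun N => ?_)
      · obtain ⟨N, hN⟩ := exists_nat_ge (max ‖x‖ |f x|)
        have hxN : x ∈ S ∩ closedBall 0 N :=
          ⟨hx, mem_closedBall_zero_iff.2 ((le_max_left _ _).trans hN)⟩
        refine le_iSup_of_le N (le_of_eq ?_)
        simp only [t, indicator_of_mem hx, indicator_of_mem hxN,
          min_eq_left ((le_max_right _ _).trans hN)]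
      · rw [indicator_of_mem hx]
        gcongr
        exact htf N x
    · have ht (N : ℕ) : t N x = 0 := indicator_of_notMem (fun h => hx h.1) _
      simp [hx, ht]
  calc ∫⁻ x, S.indicator (fun x => ENNReal.ofReal |f x| * w x) x ∂μ
      = ∫⁻ x, ⨆ N : ℕ, ENNReal.ofReal (t N x) * w x ∂μ := lintegral_congr hsup
    _ = ⨆ N : ℕ, ∫⁻ x, ENNReal.ofReal (t N x) * w x ∂μ :=
        lintegral_iSup (fun N => (hmeas N).ennreal_ofReal.mul hw) hmono
    _ ≤ C := iSup_le fun N => H (t N) N (hmeas N)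
        ((isCompact_closedBall 0 (N : ℝ)).of_isClosed_subset isClosed_closure
          ((hsupp N).trans inter_subset_right))
        ((hsupp N).trans inter_subset_left) (ht0 N)
        (fun x => by rw [abs_of_nonneg (ht0 N x)]; exact htf N x)
        (fun x => by rw [abs_of_nonneg (ht0 N x)]; exact htN N x)

theorem abs_apply_sub_le_dist {n : ℕ} (x y : Euc n) (j : Fin n) : |x j - y j| ≤ dist x y := by
  simpa [dist_eq_norm] using PiLp.norm_apply_le (x - y) j

def rieszKernel (n : ℕ) (j : Fin n) (x y : Euc n) : ℝ := (x j - y j) / ‖x - y‖ ^ (n + 1)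

def rieszIntegral (n : ℕ) (j : Fin n) (f : Euc n → ℝ) (x : Euc n) : ℝ :=
  ∫ y, rieszKernel n j x y * f y

section Kernel

variable {n : ℕ} {j : Fin n}

theorem rieszKernel_swap (x y : Euc n) : rieszKernel n j y x = -rieszKernel n j x y := by
  rw [rieszKernel, rieszKernel, norm_sub_rev, ← neg_div, neg_sub]

theorem abs_rieszKernel_le {x y : Euc n} {δ : ℝ} (hδ : 0 < δ) (h : δ ≤ dist x y) :
    |rieszKernel n j x y| ≤ (δ ^ n)⁻¹ := by
  rw [dist_eq_norm] at h
  have hxy : 0 < ‖x - y‖ := hδ.trans_le h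
  calc |rieszKernel n j x y| = |x j - y j| / ‖x - y‖ ^ (n + 1) := by
        rw [rieszKernel, abs_div, abs_of_nonneg (pow_nonneg (norm_nonneg _) _)]
    _ ≤ ‖x - y‖ / ‖x - y‖ ^ (n + 1) := by
        gcongr
        simpa [dist_eq_norm] using abs_apply_sub_le_dist x y j
    _ = (‖x - y‖ ^ n)⁻¹ := by
        rw [pow_succ]
        field_simp
    _ ≤ (δ ^ n)⁻¹ := by gcongr

theorem le_mul_rieszKernel {x y : Euc n} {s a U : ℝ} (ha : 0 < a) (h : a ≤ s * (x j - y j))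
    (hU : dist x y ≤ U) : a / U ^ (n + 1) ≤ s * rieszKernel n j x y := by
  have hxy : 0 < dist x y := dist_pos.2 fun hxy => by subst hxy; simp at h; linarith
  rw [rieszKernel, mul_div_assoc', ← dist_eq_norm]
  gcongr
  linarith

theorem measurable_rieszKernel :
    Measurable fun p : Euc n × Euc n => rieszKernel n j p.1 p.2 := by
  unfold rieszKernel
  fun_prop

theorem measurable_rieszIntegral {f : Euc n → ℝ} (hf : Measurable f) :
    Measurable (rieszIntegral n j f) :=
  (StronglyMeasurable.integral_prod_right'
    (f := fun p : Euc n × Euc n => rieszKernel n j p.1 p.2 * f p.2)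
    (measurable_rieszKernel.mul (hf.comp measurable_snd)).stronglyMeasurable).measurable

theorem integrable_rieszKernel_mul {f : Euc n → ℝ} {x : Euc n} {M δ : ℝ} (hf : Measurable f)
    (hfc : HasCompactSupport f) (hfM : ∀ y, |f y| ≤ M) (hδ : 0 < δ)
    (hx : ∀ y ∈ tsupport f, δ ≤ dist x y) :
    Integrable fun y => rieszKernel n j x y * f y :=
  integrable_mul_of_support_subset_isCompact
    (measurable_rieszKernel.comp measurable_prodMk_left).aestronglyMeasurable
    hf.aestronglyMeasurable hfc (subset_tsupport f) hfM
    fun y hy => abs_rieszKernel_le hδ (hx y hy)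

theorem abs_rieszIntegral_le {f : Euc n → ℝ} {y : Euc n} {δ : ℝ} (hf : Integrable f)
    (hδ : 0 < δ) (hy : ∀ x ∈ Function.support f, δ ≤ dist y x) :
    |rieszIntegral n j f y| ≤ (δ ^ n)⁻¹ * ∫ x, |f x| := by
  have hpt (x : Euc n) : ‖rieszKernel n j y x * f x‖ ≤ (δ ^ n)⁻¹ * |f x| := by
    rw [Real.norm_eq_abs, abs_mul]
    by_cases hx : f x = 0
    · simp [hx]
    · exact mul_le_mul_of_nonneg_right (abs_rieszKernel_le hδ (hy x hx)) (abs_nonneg _)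
  rw [← integral_const_mul]
  exact norm_integral_le_of_norm_le (hf.abs.const_mul _) (ae_of_all _ hpt)

theorem integral_mul_rieszIntegral_eq_neg {f g : Euc n → ℝ} {M M' δ : ℝ} (hf : Measurable f)
    (hg : Measurable g) (hfc : HasCompactSupport f) (hgc : HasCompactSupport g)
    (hfM : ∀ x, |f x| ≤ M) (hgM : ∀ y, |g y| ≤ M') (hδ : 0 < δ)
    (hsep : ∀ x ∈ tsupport f, ∀ y ∈ tsupport g, δ ≤ dist x y) :
    ∫ y, g y * rieszIntegral n j f y = -∫ x, f x * rieszIntegral n j g x := by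
  have hgf : ∀ p : Euc n × Euc n, |g p.1 * f p.2| ≤ M' * M := fun p => by
    rw [abs_mul]
    exact mul_le_mul (hgM p.1) (hfM p.2) (abs_nonneg _) ((abs_nonneg (g p.1)).trans (hgM p.1))
  have hint : Integrable (Function.uncurry fun y x => rieszKernel n j y x * (g y * f x))
      (volume.prod volume) :=
    integrable_mul_of_support_subset_isCompact
      (k := fun p : Euc n × Euc n => rieszKernel n j p.1 p.2)
      (g := fun p : Euc n × Euc n => g p.1 * f p.2)
      measurable_rieszKernel.aestronglyMeasurable
      ((hg.comp measurable_fst).mul (hf.comp measurable_snd)).aestronglyMeasurable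
      (hgc.prod hfc)
      (fun p hp => by
        obtain ⟨hgp, hfp⟩ := mul_ne_zero_iff.1 (Function.mem_support.1 hp)
        exact ⟨subset_tsupport _ hgp, subset_tsupport _ hfp⟩) hgf
      fun p hp => abs_rieszKernel_le hδ (by rw [dist_comm]; exact hsep _ hp.2 _ hp.1)
  calc ∫ y, g y * rieszIntegral n j f y = ∫ y, ∫ x, rieszKernel n j y x * (g y * f x) := by
        refine integral_congr_ae (ae_of_all _ fun y => ?_)
        simp only [rieszIntegral, ← integral_const_mul]
        congr 1 with x
        ring
    _ = ∫ x, ∫ y, rieszKernel n j y x * (g y * f x) := integral_integral_swap hint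
    _ = -∫ x, f x * rieszIntegral n j g x := by
        rw [← integral_neg]
        refine integral_congr_ae (ae_of_all _ fun x => ?_)
        simp only [rieszIntegral, ← integral_const_mul, ← integral_neg]
        congr 1 with y
        rw [rieszKernel_swap]
        ring

end Kernel

section Balls

variable {n : ℕ}

theorem volume_ball_eq (c : Euc n) {r : ℝ} (hr : 0 < r) :
    volume (ball c r) = ENNReal.ofReal (r ^ n) * volume (ball (0 : Euc n) 1) := by
  rw [Measure.addHaar_ball_of_pos _ _ hr, finrank_euclideanSpace_fin]

theorem volume_real_ball_eq (c : Euc n) {r : ℝ} (hr : 0 < r) :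
    volume.real (ball c r) = r ^ n * volume.real (ball (0 : Euc n) 1) := by
  rw [measureReal_def, volume_ball_eq c hr, ENNReal.toReal_mul,
    ENNReal.toReal_ofReal (by positivity), measureReal_def]

theorem volume_real_ball_pos (c : Euc n) {r : ℝ} (hr : 0 < r) : 0 < volume.real (ball c r) :=
  ENNReal.toReal_pos (measure_ball_pos volume c hr).ne' measure_ball_lt_top.ne

theorem measurable_chiR (c : Euc n) (r : ℝ) : Measurable (chiR n c r) :=
  measurable_const.indicator measurableSet_ball

theorem chiR_nonneg (c : Euc n) (r : ℝ) (x : Euc n) : 0 ≤ chiR n c r x :=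
  indicator_nonneg (fun _ _ => zero_le_one) x

theorem abs_chiR_le_one (c : Euc n) (r : ℝ) (x : Euc n) : |chiR n c r x| ≤ 1 := by
  rw [abs_of_nonneg (chiR_nonneg c r x)]
  exact indicator_le_self' (fun _ _ => zero_le_one) x

theorem abs_chiR_le_abs_chiR_of_le (c : Euc n) {r r' : ℝ} (h : r ≤ r') (x : Euc n) :
    |chiR n c r x| ≤ |chiR n c r' x| := by
  rw [abs_of_nonneg (chiR_nonneg c r x), abs_of_nonneg (chiR_nonneg c r' x)]
  exact indicator_le_indicator_of_subset (ball_subset_ball h) (fun _ => zero_le_one) x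

theorem tsupport_chiR_subset (c : Euc n) (r : ℝ) : tsupport (chiR n c r) ⊆ closedBall c r :=
  closure_minimal (support_indicator_subset.trans ball_subset_closedBall) isClosed_closedBall

theorem hasCompactSupport_chiR (c : Euc n) (r : ℝ) : HasCompactSupport (chiR n c r) :=
  (isCompact_closedBall c r).of_isClosed_subset isClosed_closure (tsupport_chiR_subset c r)

theorem integral_chiR (c : Euc n) (r : ℝ) : ∫ x, chiR n c r x = volume.real (ball c r) := by
  rw [chiR, integral_indicator_const _ measurableSet_ball, smul_eq_mul, mul_one]

theorem integrable_chiR (c : Euc n) (r : ℝ) : Integrable (chiR n c r) :=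
  (hasCompactSupport_chiR c r).integrable_of_bound (measurable_chiR c r).aestronglyMeasurable
    (abs_chiR_le_one c r)

theorem chiE_le_chiE_of_le (c : Euc n) {r r' : ℝ} (h : r ≤ r') (x : Euc n) :
    chiE n c r x ≤ chiE n c r' x :=
  indicator_le_indicator_of_subset (ball_subset_ball h) (fun _ => zero_le) x

theorem setLIntegral_chiE (c : Euc n) (r : ℝ) (s : Set (Euc n)) :
    ∫⁻ x in s, chiE n c r x = volume (ball c r ∩ s) := by
  rw [chiE, lintegral_indicator measurableSet_ball, Measure.restrict_restrict measurableSet_ball,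
    setLIntegral_one]

theorem hlMax_chiE_le_one (c : Euc n) (r : ℝ) (y : Euc n) : hlMax n (chiE n c r) y ≤ 1 := by
  refine iSup₂_le fun z t => iSup_le fun ht => ?_
  rw [setLIntegral_chiE, ENNReal.inv_mul_le_iff
    (measure_ball_pos volume z ht.1).ne' measure_ball_lt_top.ne, mul_one]
  exact measure_mono inter_subset_right

theorem hlMax_chiE_le_of_two_mul_le_dist {c y : Euc n} {r : ℝ} (hr : 0 < r)
    (hd : 2 * r ≤ dist y c) :
    hlMax n (chiE n c r) y ≤ ENNReal.ofReal ((4 * r / dist y c) ^ n) := by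
  refine iSup₂_le fun z t => iSup_le fun ⟨ht, hyz⟩ => ?_
  rw [setLIntegral_chiE, ENNReal.inv_mul_le_iff (measure_ball_pos volume z ht).ne'
    measure_ball_lt_top.ne]
  rcases (ball c r ∩ ball z t).eq_empty_or_nonempty with hempty | ⟨b, hbc, hbz⟩
  · simp [hempty]
  have htd : dist y c ≤ 4 * t := by
    have := dist_triangle4 y z b c
    rw [mem_ball] at hbc hbz hyz
    rw [dist_comm z b] at this
    linarith
  have hd0 : 0 < dist y c := by linarith
  calc volume (ball c r ∩ ball z t) ≤ volume (ball c r) := measure_mono inter_subset_left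
    _ = ENNReal.ofReal (r ^ n) * volume (ball (0 : Euc n) 1) := volume_ball_eq c hr
    _ ≤ ENNReal.ofReal (t ^ n * (4 * r / dist y c) ^ n) * volume (ball (0 : Euc n) 1) := by
        gcongr
        rw [← mul_pow]
        gcongr
        rw [mul_div_assoc', le_div_iff₀ hd0]
        nlinarith
    _ = volume (ball z t) * ENNReal.ofReal ((4 * r / dist y c) ^ n) := by
        rw [volume_ball_eq z ht, ENNReal.ofReal_mul (by positivity)]
        ring

theorem exists_dist_div_le_abs_apply_sub (hn : 0 < n) (x y : Euc n) :
    ∃ j, dist x y / n ≤ |x j - y j| := by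
  obtain ⟨j, -, hj⟩ := Finset.univ.exists_max_image (fun i => |x i - y i|) ⟨⟨0, hn⟩, by simp⟩
  refine ⟨j, div_le_of_le_mul₀ n.cast_nonneg (abs_nonneg _) ?_⟩
  have hsq : dist x y ^ 2 ≤ (|x j - y j| * n) ^ 2 := by
    rw [dist_eq_norm, EuclideanSpace.norm_sq_eq]
    calc ∑ i, ‖(x - y) i‖ ^ 2 ≤ ∑ _i : Fin n, |x j - y j| ^ 2 := by
          gcongr with i
          simpa using hj i (Finset.mem_univ i)
      _ = |x j - y j| ^ 2 * n := by simp [mul_comm]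
      _ ≤ (|x j - y j| * n) ^ 2 := by
          rw [mul_pow]
          gcongr
          exact le_self_pow₀ (Nat.one_le_cast.2 hn) two_ne_zero
  exact (pow_le_pow_iff_left₀ dist_nonneg (by positivity) two_ne_zero).1 hsq

theorem le_apply_sub_and_dist_le_of_mem_closedBall_shift {c u v : Euc n} {ρ : ℝ} (j : Fin n)
    (hu : u ∈ closedBall c ρ) (hv : v ∈ closedBall (c + (3 * ρ) • EuclideanSpace.single j 1) ρ) :
    ρ ≤ v j - u j ∧ dist v u ≤ 5 * ρ := by
  set c' := c + (3 * ρ) • EuclideanSpace.single j (1 : ℝ)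
  rw [mem_closedBall] at hu hv
  have hρ : 0 ≤ ρ := dist_nonneg.trans hu
  have hc'j : c' j = c j + 3 * ρ := by simp [c']
  have hcc' : dist c' c = 3 * ρ := by
    simp [c', dist_eq_norm, norm_smul, abs_of_nonneg hρ]
  have hvj := abs_le.1 ((abs_apply_sub_le_dist v c' j).trans hv)
  have huj := abs_le.1 ((abs_apply_sub_le_dist u c j).trans hu)
  have := dist_triangle4 v c' c u
  rw [dist_comm c u] at this
  constructor <;> linarith

end Balls

section FarField

variable {n : ℕ}

theorem mul_volume_real_le_abs_rieszIntegral_chiR {j : Fin n} {c y : Euc n} {r : ℝ} (hr : 0 < r)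
    (hd : 2 * n * r ≤ dist y c) (hj : dist y c / n ≤ |y j - c j|) :
    dist y c / (2 * n) / (3 / 2 * dist y c) ^ (n + 1) * volume.real (ball c r) ≤
      |rieszIntegral n j (chiR n c r) y| := by
  set d := dist y c
  have hn : (1 : ℝ) ≤ n := Nat.one_le_cast.2 j.pos
  have hd0 : 0 < d := by nlinarith
  have hrd : r ≤ d / (2 * n) := by rw [le_div_iff₀ (by positivity)]; linarith
  have hd2 : d / (2 * n) ≤ d / 2 := div_le_div_of_nonneg_left (by positivity) two_pos (by linarith)
  set s : ℝ := (SignType.sign (y j - c j) : ℝ)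
  have hs : |s| ≤ 1 := by
    rcases SignType.trichotomy (SignType.sign (y j - c j)) with h | h | h <;> simp [s, h]
  rw [← integral_chiR]
  refine mul_integral_le_abs_integral_mul (integrable_chiR c r)
    (integrable_rieszKernel_mul (measurable_chiR c r) (hasCompactSupport_chiR c r)
      (abs_chiR_le_one c r) hr fun x hx => ?_) (chiR_nonneg c r) hs fun x hx => ?_
  · have := dist_triangle y x c
    have := mem_closedBall.1 (tsupport_chiR_subset c r hx)
    linarith
  have hx : dist x c < r := mem_ball.1 (support_indicator_subset hx)
  refine le_mul_rieszKernel (by positivity) ?_ ?_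
  · have hsx : s * (x j - c j) ≤ r := by
      refine (le_abs_self _).trans ?_
      rw [abs_mul]
      exact (mul_le_of_le_one_left (abs_nonneg _) hs).trans
        ((abs_apply_sub_le_dist x c j).trans hx.le)
    have hsy : s * (y j - c j) = |y j - c j| := by rw [mul_comm]; exact self_mul_sign _
    have : d / (2 * n) = d / n - d / (2 * n) := by field_simp; ring
    nlinarith
  · have := dist_triangle y c x
    rw [dist_comm c x] at this
    linarith

theorem exists_hlMax_chiE_le_add_sum (hn : 0 < n) :
    ∃ κ : ℝ, ∀ (c : Euc n) (r : ℝ), 0 < r → ∀ y, hlMax n (chiE n c r) y ≤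
      chiE n c (2 * n * r) y + ENNReal.ofReal κ * ∑ j, (ball c (2 * r))ᶜ.indicator
        (fun y => ENNReal.ofReal |rieszIntegral n j (chiR n c r) y|) y := by
  set ω := volume.real (ball (0 : Euc n) 1)
  have hω : 0 < ω := volume_real_ball_pos 0 one_pos
  have hn1 : (1 : ℝ) ≤ n := Nat.one_le_cast.2 hn
  refine ⟨4 ^ n * (2 * n) * (3 / 2) ^ (n + 1) / ω, fun c r hr y => ?_⟩
  by_cases hy : y ∈ ball c (2 * n * r)
  · calc hlMax n (chiE n c r) y ≤ 1 := hlMax_chiE_le_one c r y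
      _ = chiE n c (2 * n * r) y := by rw [chiE, indicator_of_mem hy]
      _ ≤ _ := le_self_add
  have hd : 2 * n * r ≤ dist y c := not_lt.1 hy
  have hd0 : 0 < dist y c := by nlinarith
  have hfar : y ∈ (ball c (2 * r))ᶜ := fun h => hy (ball_subset_ball (by nlinarith) h)
  obtain ⟨j, hj⟩ := exists_dist_div_le_abs_apply_sub hn y c
  refine le_add_left ?_
  calc hlMax n (chiE n c r) y ≤ ENNReal.ofReal ((4 * r / dist y c) ^ n) :=
        hlMax_chiE_le_of_two_mul_le_dist hr (by nlinarith)
    _ ≤ ENNReal.ofReal (4 ^ n * (2 * n) * (3 / 2) ^ (n + 1) / ω) *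
          ENNReal.ofReal |rieszIntegral n j (chiR n c r) y| := by
        rw [← ENNReal.ofReal_mul (by positivity)]
        refine ENNReal.ofReal_le_ofReal ?_
        calc (4 * r / dist y c) ^ n = 4 ^ n * (2 * n) * (3 / 2) ^ (n + 1) / ω *
              (dist y c / (2 * n) / (3 / 2 * dist y c) ^ (n + 1) * volume.real (ball c r)) := by
              rw [volume_real_ball_eq c hr, div_pow, mul_pow]
              field_simp
              ring
          _ ≤ _ := by
              gcongr
              exact mul_volume_real_le_abs_rieszIntegral_chiR hr hd hj
    _ ≤ _ := by
        gcongr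
        rw [← indicator_of_mem hfar (fun y => ENNReal.ofReal |rieszIntegral n j (chiR n c r) y|)]
        exact Finset.single_le_sum (f := fun j => (ball c (2 * r))ᶜ.indicator
          (fun y => ENNReal.ofReal |rieszIntegral n j (chiR n c r) y|) y)
          (fun _ _ => zero_le) (Finset.mem_univ j)

end FarField

section KotheDual

variable {n : ℕ} (X : BFL n)

theorem kdual_mono {g₁ g₂ : Euc n → ℝ≥0∞} (h : ∀ x, g₁ x ≤ g₂ x) : kdual X g₁ ≤ kdual X g₂ :=
  iSup₂_mono fun _ _ => lintegral_mono fun x => by gcongr; exact h x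

theorem kdual_add_le {g₁ g₂ : Euc n → ℝ≥0∞} (hg₁ : Measurable g₁) :
    kdual X (fun x => g₁ x + g₂ x) ≤ kdual X g₁ + kdual X g₂ := by
  refine iSup₂_le fun f hf => ?_
  have hm : Measurable fun x => ENNReal.ofReal |f x| * g₁ x := hf.1.abs.ennreal_ofReal.mul hg₁
  simp only [mul_add]
  rw [lintegral_add_left hm]
  exact add_le_add (le_iSup₂_of_le f hf le_rfl) (le_iSup₂_of_le f hf le_rfl)

theorem kdual_const_mul {c : ℝ≥0∞} (hc : c ≠ ⊤) (g : Euc n → ℝ≥0∞) :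
    kdual X (fun x => c * g x) = c * kdual X g := by
  simp only [kdual, ENNReal.mul_iSup]
  refine iSup_congr fun f => iSup_congr fun _ => ?_
  rw [← lintegral_const_mul' _ _ hc]
  congr 1 with x
  ring

theorem kdual_sum_le {ι : Type*} (s : Finset ι) {g : ι → Euc n → ℝ≥0∞}
    (hg : ∀ i ∈ s, Measurable (g i)) :
    kdual X (fun x => ∑ i ∈ s, g i x) ≤ ∑ i ∈ s, kdual X (g i) := by
  refine iSup₂_le fun f hf => ?_
  have hm : ∀ i ∈ s, Measurable fun x => ENNReal.ofReal |f x| * g i x :=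
    fun i hi => hf.1.abs.ennreal_ofReal.mul (hg i hi)
  simp only [Finset.mul_sum]
  rw [lintegral_finsetSum _ hm]
  exact Finset.sum_le_sum fun i _ => le_iSup₂_of_le f hf le_rfl

theorem mul_kdual_le {g : Euc n → ℝ≥0∞} {A C : ℝ≥0∞}
    (h : ∀ f, Measurable f → X.N f ≤ 1 → A * ∫⁻ x, ENNReal.ofReal |f x| * g x ≤ C) :
    A * kdual X g ≤ C := by
  simp only [kdual, ENNReal.mul_iSup]
  exact iSup₂_le fun f hf => h f hf.1 hf.2

theorem lintegral_mul_le_kdual {u : Euc n → ℝ} (hu : Measurable u) {c : ℝ} (hc : 0 < c)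
    (hN : X.N u ≤ ENNReal.ofReal c) (g : Euc n → ℝ≥0∞) :
    ∫⁻ x, ENNReal.ofReal |u x| * g x ≤ ENNReal.ofReal c * kdual X g := by
  have hN' : X.N (fun x => c⁻¹ * u x) ≤ 1 := by
    rw [X.smul, abs_inv, abs_of_pos hc, ENNReal.ofReal_inv_of_pos hc,
      ENNReal.inv_mul_le_iff (by simpa using hc) ENNReal.ofReal_ne_top, mul_one]
    exact hN
  calc ∫⁻ x, ENNReal.ofReal |u x| * g x
      = ENNReal.ofReal c * ∫⁻ x, ENNReal.ofReal |c⁻¹ * u x| * g x := by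
        rw [← lintegral_const_mul' _ _ ENNReal.ofReal_ne_top]
        congr 1 with x
        rw [← mul_assoc, ← ENNReal.ofReal_mul hc.le, abs_mul, abs_inv, abs_of_pos hc,
          mul_inv_cancel_left₀ hc.ne']
    _ ≤ ENNReal.ofReal c * kdual X g := by
        gcongr
        exact le_iSup₂_of_le (fun x => c⁻¹ * u x) ⟨hu.const_mul _, hN'⟩ le_rfl

end KotheDual

section RieszOn

variable {n : ℕ} {j : Fin n} {X : BFL n} {T : (Euc n → ℝ) → Euc n → ℝ}

theorem IsRieszOn.eq_rieszIntegral (hT : IsRieszOn n j X T) {f : Euc n → ℝ} {M : ℝ}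
    (hf : Measurable f) (hfM : ∀ x, |f x| ≤ M) (hfc : HasCompactSupport f) {x : Euc n}
    (hx : x ∉ tsupport f) : T f x = rieszIntegral n j f x := by
  rw [hT.2 f hf ⟨M, hfM⟩ hfc x hx, rieszIntegral]
  congr 1 with y
  rw [rieszKernel, ← Real.rpow_natCast]
  push_cast
  rfl

theorem IsRieszOn.exists_pos_bound (hT : IsRieszOn n j X T) :
    ∃ c₀ : ℝ, 0 < c₀ ∧ ∀ f, X.N (T f) ≤ ENNReal.ofReal c₀ * X.N f := by
  obtain ⟨C, hC, hCT⟩ := hT.1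
  refine ⟨C.toReal + 1, by positivity, fun f => (hCT f).trans ?_⟩
  gcongr
  exact (ENNReal.le_ofReal_iff_toReal_le hC.ne (by positivity)).2 (by linarith)

theorem IsRieszOn.ofReal_mul_N_chiR_le (hT : IsRieszOn n j X T) {g : Euc n → ℝ} {M : ℝ}
    (hg : Measurable g) (hgc : HasCompactSupport g) (hg0 : ∀ y, 0 ≤ g y) (hgM : ∀ y, |g y| ≤ M)
    {a : Euc n} {ρ δ s m : ℝ} (hδ : 0 < δ) (hs : |s| ≤ 1) (hm : 0 ≤ m)
    (hsep : ∀ x ∈ ball a ρ, ∀ y ∈ tsupport g, δ ≤ dist x y)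
    (hK : ∀ x ∈ ball a ρ, ∀ y ∈ tsupport g, m ≤ s * rieszKernel n j x y) :
    ENNReal.ofReal (m * ∫ y, g y) * X.N (chiR n a ρ) ≤ X.N (T g) := by
  have hI : 0 ≤ m * ∫ y, g y := mul_nonneg hm (integral_nonneg hg0)
  rw [← abs_of_nonneg hI, ← X.smul]
  refine X.mono _ _ fun x => ?_
  by_cases hx : x ∈ ball a ρ
  · have hxg : x ∉ tsupport g := fun hxg => by linarith [hsep x hx x hxg, dist_self x]
    rw [chiR, indicator_of_mem hx, mul_one, abs_of_nonneg hI,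
      hT.eq_rieszIntegral hg hgM hgc hxg]
    exact mul_integral_le_abs_integral_mul (hgc.integrable_of_bound hg.aestronglyMeasurable hgM)
      (integrable_rieszKernel_mul hg hgc hgM hδ (hsep x hx)) hg0 hs
      fun y hy => hK x hx y (subset_tsupport g hy)
  · rw [chiR, indicator_of_notMem hx, mul_zero, abs_zero]
    exact abs_nonneg _

theorem IsRieszOn.ofReal_mul_N_chiR_le_N_T_chiR_shift (hT : IsRieszOn n j X T) (c : Euc n)
    {ρ : ℝ} (hρ : 0 < ρ) :
    ENNReal.ofReal (ρ / (5 * ρ) ^ (n + 1) * volume.real (ball c ρ)) * X.N (chiR n c ρ) ≤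
      X.N (T (chiR n (c + (3 * ρ) • EuclideanSpace.single j 1) ρ)) := by
  set c' := c + (3 * ρ) • EuclideanSpace.single j (1 : ℝ)
  have hvol : volume.real (ball c ρ) = ∫ y, chiR n c' ρ y := by
    rw [integral_chiR, volume_real_ball_eq c hρ, volume_real_ball_eq c' hρ]
  have hgeo (x) (hx : x ∈ ball c ρ) (y) (hy : y ∈ tsupport (chiR n c' ρ)) :=
    le_apply_sub_and_dist_le_of_mem_closedBall_shift j (ball_subset_closedBall hx)
      (tsupport_chiR_subset c' ρ hy)
  rw [hvol]
  refine hT.ofReal_mul_N_chiR_le (measurable_chiR c' ρ) (hasCompactSupport_chiR c' ρ)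
    (chiR_nonneg c' ρ) (abs_chiR_le_one c' ρ) hρ (s := -1) (by simp) (by positivity)
    (fun x hx y hy => ?_) fun x hx y hy => ?_
  · rw [dist_comm]
    exact (hgeo x hx y hy).1.trans ((le_abs_self _).trans (abs_apply_sub_le_dist y x j))
  · rw [neg_one_mul, ← rieszKernel_swap, ← one_mul (rieszKernel n j y x)]
    exact le_mul_rieszKernel hρ (by simpa using (hgeo x hx y hy).1) (hgeo x hx y hy).2

variable {c₀ : ℝ}

theorem IsRieszOn.ofReal_abs_integral_mul_rieszIntegral_chiR_le (hT : IsRieszOn n j X T)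
    (hc₀ : 0 < c₀) (hTc : ∀ f, X.N (T f) ≤ ENNReal.ofReal c₀ * X.N f)
    {c : Euc n} {r : ℝ} (hr : 0 < r) {h : Euc n → ℝ} {M : ℝ} (hh : Measurable h)
    (hhc : HasCompactSupport h) (hhM : ∀ y, |h y| ≤ M) (hXh : X.N h ≤ 1)
    (hfar : tsupport h ⊆ (ball c (2 * r))ᶜ) :
    ENNReal.ofReal |∫ y, h y * rieszIntegral n j (chiR n c r) y| ≤
      ENNReal.ofReal c₀ * kdual X (chiE n c r) := by
  have hsep : ∀ x ∈ tsupport (chiR n c r), ∀ y ∈ tsupport h, r ≤ dist x y := fun x hx y hy => by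
    have hyc : 2 * r ≤ dist y c := not_lt.1 fun h' => hfar hy (mem_ball.2 h')
    have := dist_triangle y x c
    linarith [mem_closedBall.1 (tsupport_chiR_subset c r hx), dist_comm x y]
  set u := fun x => chiR n c r x * rieszIntegral n j h x
  have hu : X.N u ≤ ENNReal.ofReal c₀ := by
    refine (X.mono (T h) u fun x => ?_).trans ((hTc h).trans ?_)
    · by_cases hx : x ∈ ball c r
      · have hxh : x ∉ tsupport h := fun hxh => by
          have := hsep x (subset_tsupport _ (by simp [chiR, hx])) x hxh
          linarith [dist_self x]
        simp only [u, chiR, indicator_of_mem hx, one_mul, hT.eq_rieszIntegral hh hhM hhc hxh,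
          le_refl]
      · simp [u, chiR, hx]
    · exact mul_le_of_le_one_right' hXh
  rw [integral_mul_rieszIntegral_eq_neg (measurable_chiR c r) hh (hasCompactSupport_chiR c r) hhc
    (abs_chiR_le_one c r) hhM hr hsep, abs_neg]
  calc ENNReal.ofReal |∫ x, u x| ≤ ∫⁻ x, ENNReal.ofReal |u x| := by
        simpa only [Real.enorm_eq_ofReal_abs] using enorm_integral_le_lintegral_enorm u
    _ = ∫⁻ x, ENNReal.ofReal |u x| * chiE n c r x := by
        congr 1 with x
        by_cases hx : x ∈ ball c r <;> simp [u, chiR, chiE, hx]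
    _ ≤ ENNReal.ofReal c₀ * kdual X (chiE n c r) :=
        lintegral_mul_le_kdual X ((measurable_chiR c r).mul (measurable_rieszIntegral hh)) hc₀ hu _

theorem IsRieszOn.ofReal_mul_N_chiR_shift_mul_kdual_le (hT : IsRieszOn n j X T)
    (hTc : ∀ f, X.N (T f) ≤ ENNReal.ofReal c₀ * X.N f) (c : Euc n) {ρ : ℝ} (hρ : 0 < ρ) :
    ENNReal.ofReal (ρ / (5 * ρ) ^ (n + 1)) *
      X.N (chiR n (c + (3 * ρ) • EuclideanSpace.single j 1) ρ) * kdual X (chiE n c ρ) ≤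
        ENNReal.ofReal c₀ := by
  set c' := c + (3 * ρ) • EuclideanSpace.single j (1 : ℝ)
  set A := ENNReal.ofReal (ρ / (5 * ρ) ^ (n + 1)) * X.N (chiR n c' ρ)
  refine mul_kdual_le X fun f hf hXf => ?_
  calc A * ∫⁻ x, ENNReal.ofReal |f x| * chiE n c ρ x
      ≤ ∫⁻ x, (closedBall c ρ).indicator (fun x => ENNReal.ofReal |f x| * A) x := by
        refine (lintegral_const_mul_le _ _).trans (lintegral_mono fun x => ?_)
        by_cases hx : x ∈ ball c ρ
        · rw [chiE, indicator_of_mem hx, indicator_of_mem (ball_subset_closedBall hx), mul_one,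
            mul_comm]
        · simp [chiE, hx]
    _ ≤ ENNReal.ofReal c₀ := lintegral_indicator_le_of_truncations hf isClosed_closedBall
        measurable_const fun h M hh hhc hhS hh0 hhf hhM => ?_
  have hXh : X.N h ≤ 1 := (X.mono f h hhf).trans hXf
  have hgeo (x) (hx : x ∈ ball c' ρ) (y) (hy : y ∈ tsupport h) :=
    le_apply_sub_and_dist_le_of_mem_closedBall_shift j (hhS hy) (ball_subset_closedBall hx)
  have hlow : ENNReal.ofReal (ρ / (5 * ρ) ^ (n + 1) * ∫ y, h y) * X.N (chiR n c' ρ) ≤ X.N (T h) :=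
    hT.ofReal_mul_N_chiR_le hh hhc hh0 hhM hρ (s := 1) (by simp) (by positivity)
      (fun x hx y hy => (hgeo x hx y hy).1.trans ((le_abs_self _).trans
        (abs_apply_sub_le_dist x y j)))
      fun x hx y hy => le_mul_rieszKernel hρ (by simpa using (hgeo x hx y hy).1) (hgeo x hx y hy).2
  calc ∫⁻ x, ENNReal.ofReal (h x) * A = ENNReal.ofReal (ρ / (5 * ρ) ^ (n + 1) * ∫ y, h y) *
        X.N (chiR n c' ρ) := by
        rw [lintegral_mul_const _ hh.ennreal_ofReal, ← ofReal_integral_eq_lintegral_ofReal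
          (hhc.integrable_of_bound hh.aestronglyMeasurable hhM) (ae_of_all _ hh0),
          ENNReal.ofReal_mul (by positivity)]
        ring
    _ ≤ ENNReal.ofReal c₀ * X.N h := hlow.trans (hTc h)
    _ ≤ ENNReal.ofReal c₀ := mul_le_of_le_one_right' hXh

theorem IsRieszOn.kdual_indicator_abs_rieszIntegral_chiR_le (hT : IsRieszOn n j X T)
    (hc₀ : 0 < c₀) (hTc : ∀ f, X.N (T f) ≤ ENNReal.ofReal c₀ * X.N f) (c : Euc n) {r : ℝ}
    (hr : 0 < r) :
    kdual X ((ball c (2 * r))ᶜ.indicator fun y => ENNReal.ofReal |rieszIntegral n j (chiR n c r) y|)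
      ≤ ENNReal.ofReal c₀ * kdual X (chiE n c r) := by
  set Φ := rieszIntegral n j (chiR n c r)
  have hΦ : Measurable Φ := measurable_rieszIntegral (measurable_chiR c r)
  obtain ⟨σ, hσ, hσ1, hσΦ⟩ := exists_measurable_abs_le_one_mul_eq_abs hΦ
  refine iSup₂_le fun f hf => ?_
  simp only [← indicator_mul_right _ fun x => ENNReal.ofReal |f x|]
  refine lintegral_indicator_le_of_truncations hf.1 isOpen_ball.isClosed_compl
    hΦ.abs.ennreal_ofReal fun h M hh hhc hhS hh0 hhf hhM => ?_
  -- pairing against `σ h` instead of `h` turns `∫ h |Φ|` into a pairing with `Φ` itself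
  have hσh (y : Euc n) : |σ y * h y| ≤ |h y| := by
    rw [abs_mul]
    exact mul_le_of_le_one_left (abs_nonneg _) (hσ1 y)
  have hΦb (y : Euc n) (hy : y ∈ tsupport h) :
      |Φ y| ≤ (r ^ n)⁻¹ * ∫ x, |chiR n c r x| := by
    refine abs_rieszIntegral_le (integrable_chiR c r) hr fun x hx => ?_
    have hyc : 2 * r ≤ dist y c := not_lt.1 fun h' => hhS hy (mem_ball.2 h')
    have := dist_triangle y x c
    linarith [mem_ball.1 (support_indicator_subset hx)]
  have hint : Integrable fun y => Φ y * (σ y * h y) :=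
    integrable_mul_of_support_subset_isCompact hΦ.aestronglyMeasurable
      (hσ.mul hh).aestronglyMeasurable hhc
      ((Function.support_mul_subset_right _ _).trans (subset_tsupport h))
      (fun y => (hσh y).trans (hhM y)) hΦb
  calc ∫⁻ y, ENNReal.ofReal (h y) * ENNReal.ofReal |Φ y|
      = ∫⁻ y, ENNReal.ofReal (Φ y * (σ y * h y)) := by
        congr 1 with y
        rw [← ENNReal.ofReal_mul (hh0 y), ← hσΦ]
        ring_nf
    _ = ENNReal.ofReal (∫ y, σ y * h y * Φ y) := by
        have hnn (y : Euc n) : 0 ≤ Φ y * (σ y * h y) := by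
          rw [mul_left_comm, ← mul_assoc, hσΦ]
          exact mul_nonneg (abs_nonneg _) (hh0 y)
        rw [← ofReal_integral_eq_lintegral_ofReal hint (ae_of_all _ hnn)]
        congr 2 with y
        ring
    _ ≤ ENNReal.ofReal |∫ y, σ y * h y * Φ y| := ENNReal.ofReal_le_ofReal (le_abs_self _)
    _ ≤ ENNReal.ofReal c₀ * kdual X (chiE n c r) :=
        hT.ofReal_abs_integral_mul_rieszIntegral_chiR_le hc₀ hTc hr (hσ.mul hh) hhc.mul_left
          (fun y => (hσh y).trans (hhM y))
          ((X.mono h _ hσh).trans ((X.mono f h hhf).trans hf.2))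
          (tsupport_mul_subset_right.trans hhS)

theorem IsRieszOn.exists_N_chiR_mul_kdual_chiE_le (hT : IsRieszOn n j X T) :
    ∃ A : ℝ≥0∞, A < ⊤ ∧ ∀ (c : Euc n) (ρ : ℝ), 0 < ρ →
      X.N (chiR n c ρ) * kdual X (chiE n c ρ) ≤ A * volume (ball c ρ) := by
  obtain ⟨c₀, hc₀, hTc⟩ := hT.exists_pos_bound
  set ω := volume.real (ball (0 : Euc n) 1)
  have hω : 0 < ω := volume_real_ball_pos 0 one_pos
  refine ⟨ENNReal.ofReal (c₀ ^ 2 * 5 ^ (2 * n + 2) / ω ^ 2), ENNReal.ofReal_lt_top,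
    fun c ρ hρ => ?_⟩
  set m := ρ / (5 * ρ) ^ (n + 1)
  set V := volume.real (ball c ρ)
  have hV : 0 < V := volume_real_ball_pos c hρ
  set N₁ := X.N (chiR n (c + (3 * ρ) • EuclideanSpace.single j 1) ρ)
  have hkey : ENNReal.ofReal (m ^ 2 * V) * (X.N (chiR n c ρ) * kdual X (chiE n c ρ)) ≤
      ENNReal.ofReal (c₀ ^ 2) :=
    calc ENNReal.ofReal (m ^ 2 * V) * (X.N (chiR n c ρ) * kdual X (chiE n c ρ))
        = ENNReal.ofReal (m * V) * X.N (chiR n c ρ) *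
            (ENNReal.ofReal m * kdual X (chiE n c ρ)) := by
          rw [show m ^ 2 * V = m * V * m by ring, ENNReal.ofReal_mul (by positivity)]
          ring
      _ ≤ ENNReal.ofReal c₀ * N₁ * (ENNReal.ofReal m * kdual X (chiE n c ρ)) := by
          gcongr ?_ * _
          exact (hT.ofReal_mul_N_chiR_le_N_T_chiR_shift c hρ).trans (hTc _)
      _ = ENNReal.ofReal c₀ * (ENNReal.ofReal m * N₁ * kdual X (chiE n c ρ)) := by ring
      _ ≤ ENNReal.ofReal c₀ * ENNReal.ofReal c₀ := by
          gcongr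
          exact hT.ofReal_mul_N_chiR_shift_mul_kdual_le hTc c hρ
      _ = ENNReal.ofReal (c₀ ^ 2) := by rw [← ENNReal.ofReal_mul hc₀.le, sq]
  refine (ENNReal.mul_le_mul_iff_right (ENNReal.ofReal_pos.2 (by positivity)).ne'
    ENNReal.ofReal_ne_top).1 (hkey.trans (le_of_eq ?_))
  rw [← ofReal_measureReal measure_ball_lt_top.ne, ← ENNReal.ofReal_mul (by positivity),
    ← ENNReal.ofReal_mul (by positivity)]
  congr 1
  simp only [m, V, volume_real_ball_eq c hρ, mul_pow]
  field_simp
  ring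

theorem exists_kdual_hlMax_chiE_le (hn : 0 < n)
    (hRiesz : ∀ j : Fin n, ∃ T : (Euc n → ℝ) → Euc n → ℝ, IsRieszOn n j X T) :
    ∃ K : ℝ≥0∞, K < ⊤ ∧ ∀ (c : Euc n) (r : ℝ), 0 < r →
      kdual X (hlMax n (chiE n c r)) ≤
        kdual X (chiE n c (2 * n * r)) + K * kdual X (chiE n c r) := by
  choose T hT using hRiesz
  choose c₀ hc₀ hTc using fun j => (hT j).exists_pos_bound
  obtain ⟨κ, hκ⟩ := exists_hlMax_chiE_le_add_sum hn
  refine ⟨ENNReal.ofReal κ * ∑ j, ENNReal.ofReal (c₀ j), ENNReal.mul_lt_top ENNReal.ofReal_lt_top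
    (ENNReal.sum_lt_top.2 fun _ _ => ENNReal.ofReal_lt_top), fun c r hr => ?_⟩
  set w := fun (j : Fin n) y => (ball c (2 * r))ᶜ.indicator
    (fun y => ENNReal.ofReal |rieszIntegral n j (chiR n c r) y|) y
  have hw (j : Fin n) : Measurable (w j) :=
    (measurable_rieszIntegral (measurable_chiR c r)).abs.ennreal_ofReal.indicator
      measurableSet_ball.compl
  calc kdual X (hlMax n (chiE n c r))
      ≤ kdual X fun y => chiE n c (2 * n * r) y + ENNReal.ofReal κ * ∑ j, w j y :=
        kdual_mono X (hκ c r hr)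
    _ ≤ kdual X (chiE n c (2 * n * r)) + ENNReal.ofReal κ * ∑ j, kdual X (w j) := by
        refine (kdual_add_le X (g₁ := chiE n c (2 * n * r))
          (measurable_const.indicator measurableSet_ball)).trans ?_
        rw [kdual_const_mul X ENNReal.ofReal_ne_top]
        gcongr
        exact kdual_sum_le X _ fun j _ => hw j
    _ ≤ kdual X (chiE n c (2 * n * r)) +
          ENNReal.ofReal κ * ∑ j, ENNReal.ofReal (c₀ j) * kdual X (chiE n c r) := by
        gcongr with j
        exact (hT j).kdual_indicator_abs_rieszIntegral_chiR_le (hc₀ j) (hTc j) c hr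
    _ = _ := by rw [← Finset.sum_mul, ← mul_assoc]

end RieszOn

theorem stmt5_general (n : ℕ) (hn : 0 < n) (X : BFL n)
    (hRiesz : ∀ j : Fin n, ∃ T : (Euc n → ℝ) → Euc n → ℝ, IsRieszOn n j X T) :
    ∃ C : ℝ≥0∞, C < ⊤ ∧ ∀ (c : Euc n) (r : ℝ), 0 < r →
      X.N (chiR n c r) * kdual X (hlMax n (chiE n c r)) ≤ C * volume (ball c r) := by
  obtain ⟨T, hT⟩ := hRiesz ⟨0, hn⟩
  obtain ⟨A, hA, hAB⟩ := hT.exists_N_chiR_mul_kdual_chiE_le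
  obtain ⟨K, hK, hMK⟩ := exists_kdual_hlMax_chiE_le hn hRiesz
  refine ⟨(1 + K) * A * ENNReal.ofReal ((2 * n) ^ n), by finiteness, fun c r hr => ?_⟩
  have hn' : (1 : ℝ) ≤ n := Nat.one_le_cast.2 hn
  have hr' : r ≤ 2 * n * r := by nlinarith
  calc X.N (chiR n c r) * kdual X (hlMax n (chiE n c r))
      ≤ X.N (chiR n c (2 * n * r)) * ((1 + K) * kdual X (chiE n c (2 * n * r))) := by
        gcongr
        · exact X.mono _ _ (abs_chiR_le_abs_chiR_of_le c hr')
        · refine (hMK c r hr).trans ?_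
          rw [add_mul, one_mul]
          gcongr
          exact kdual_mono X (chiE_le_chiE_of_le c hr')
    _ = (1 + K) * (X.N (chiR n c (2 * n * r)) * kdual X (chiE n c (2 * n * r))) := by ring
    _ ≤ (1 + K) * (A * volume (ball c (2 * n * r))) := by
        gcongr (1 + K) * ?_
        exact hAB c _ (hr.trans_le hr')
    _ = (1 + K) * A * ENNReal.ofReal ((2 * n) ^ n) * volume (ball c r) := by
        rw [volume_ball_eq c (hr.trans_le hr'), volume_ball_eq c hr, mul_pow,
          ENNReal.ofReal_mul (by positivity)]
        ring

theorem stmt5 (n : ℕ) (hn : 0 < n) (X : BFL n)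
    (hXballs : ∀ (c : Euc n) (r : ℝ), 0 < r → 0 < X.N (chiR n c r) ∧ X.N (chiR n c r) < ⊤)
    (hRiesz : ∀ j : Fin n, ∃ T : (Euc n → ℝ) → Euc n → ℝ, IsRieszOn n j X T) :
    ∃ C : ℝ≥0∞, C < ⊤ ∧ ∀ (c : Euc n) (r : ℝ), 0 < r →
      X.N (chiR n c r) * kdual X (hlMax n (chiE n c r)) ≤ C * volume (ball c r) :=
  stmt5_general n hn X hRiesz
end
end

section
/- Let B be a ball in ℝ^n with |c_B| = 6 r_B and let x ∈ B. Then 2B ⊆ B(x, (3/5)|x|). Moreover, for x ∈ B and y ∉ 2B, |x−y|^{−n} ≲ |B|^{−1} Mχ_B(y), where M is the Hardy–Littlewood maximal operator, with a constant depending only on n. -/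
open MeasureTheory Metric Set ENNReal

noncomputable section

/-! If `x ∈ B` and `y ∉ 2B` then `r_B < |x - y|`, so `B ⊆ B(x, 2|x - y|)`, a ball that also contains
`y`. Averaging `χ_B` over that ball gives `Mχ_B(y) ≥ |B| / |B(x, 2|x - y|)| = |B| / (|B(0, 2)| |x - y|ⁿ)`,
which is the claim with `C = |B(0, 2)|`. -/

section Geometry

variable {E : Type*} [SeminormedAddCommGroup E]

theorem ball_two_mul_subset_ball_norm {c x : E} {r : ℝ} (hc : ‖c‖ = 6 * r)
    (hx : x ∈ ball c r) : ball c (2 * r) ⊆ ball x ((3 / 5) * ‖x‖) := by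
  have hxc : ‖x - c‖ < r := mem_ball_iff_norm.mp hx
  have hx_norm : 5 * r ≤ ‖x‖ := by linarith [norm_sub_norm_le c x, norm_sub_rev c x]
  refine ball_subset_ball' ?_
  rw [dist_comm, dist_eq_norm]
  linarith

end Geometry

section FarPoints

variable {X : Type*} [PseudoMetricSpace X] {c x y : X} {r : ℝ}

theorem lt_dist_of_mem_ball_of_notMem_ball (hx : x ∈ ball c r) (hy : y ∉ ball c (2 * r)) :
    r < dist x y := by
  rw [mem_ball] at hx hy
  linarith [dist_triangle y x c, dist_comm x y]

theorem ball_subset_ball_dist_mul_two (hx : x ∈ ball c r) (hy : y ∉ ball c (2 * r)) :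
    ball c r ⊆ ball x (dist x y * 2) := by
  refine ball_subset_ball' ?_
  linarith [mem_ball'.mp hx, lt_dist_of_mem_ball_of_notMem_ball hx hy]

end FarPoints

section HaarBall

variable {E : Type*} [NormedAddCommGroup E] [NormedSpace ℝ E] [MeasurableSpace E] [BorelSpace E]
  [FiniteDimensional ℝ E] (μ : Measure E) [μ.IsAddHaarMeasure]

theorem inv_ofReal_pow_finrank_eq_mul_inv_addHaar_ball (x : E) {d : ℝ} (hd : 0 < d) :
    (ENNReal.ofReal (d ^ Module.finrank ℝ E))⁻¹ = μ (ball 0 2) * (μ (ball x (d * 2)))⁻¹ := by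
  have h0 : μ (ball (0 : E) 2) ≠ 0 := (measure_ball_pos μ _ two_pos).ne'
  have htop : μ (ball (0 : E) 2) ≠ ⊤ := measure_ball_lt_top.ne
  rw [Measure.addHaar_ball_mul_of_pos μ x hd, ENNReal.mul_inv (Or.inr htop) (Or.inr h0),
    mul_left_comm, ENNReal.mul_inv_cancel h0 htop, mul_one]

end HaarBall

section Maximal

variable {n : ℕ}

theorem le_hlMax (g : Euc n → ℝ≥0∞) {a y : Euc n} {R : ℝ} (hR : 0 < R) (hy : y ∈ ball a R) :
    (volume (ball a R))⁻¹ * ∫⁻ z in ball a R, g z ≤ hlMax n g y :=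
  le_iSup_of_le a <| le_iSup_of_le R <| le_iSup_of_le ⟨hR, hy⟩ le_rfl

theorem setLIntegral_chiE_of_subset {c : Euc n} {r : ℝ} {s : Set (Euc n)}
    (h : ball c r ⊆ s) : ∫⁻ z in s, chiE n c r z = volume (ball c r) := by
  rw [chiE, lintegral_indicator measurableSet_ball, setLIntegral_const,
    Measure.restrict_apply measurableSet_ball, inter_eq_self_of_subset_left h, one_mul]

theorem volume_ball_div_le_hlMax_chiE {c a y : Euc n} {r R : ℝ} (hR : 0 < R)
    (hy : y ∈ ball a R) (h : ball c r ⊆ ball a R) :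
    volume (ball c r) / volume (ball a R) ≤ hlMax n (chiE n c r) y := by
  rw [div_eq_mul_inv, mul_comm, ← setLIntegral_chiE_of_subset h]
  exact le_hlMax _ hR hy

end Maximal

theorem stmt19_general (n : ℕ) :
    ∃ C : ℝ≥0∞, C < ⊤ ∧ ∀ (c : Euc n) (r : ℝ), 0 < r → ‖c‖ = 6 * r →
      ∀ x ∈ ball c r,
        ball c (2 * r) ⊆ ball x ((3 / 5) * ‖x‖) ∧
        ∀ y ∉ ball c (2 * r),
          volume (ball c r) * (ENNReal.ofReal (‖x - y‖ ^ (n : ℝ)))⁻¹ ≤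
            C * hlMax n (chiE n c r) y := by
  refine ⟨volume (ball (0 : Euc n) 2), measure_ball_lt_top, fun c r hr hc x hx => ?_⟩
  refine ⟨ball_two_mul_subset_ball_norm hc hx, fun y hy => ?_⟩
  have hd : 0 < dist x y := hr.trans (lt_dist_of_mem_ball_of_notMem_ball hx hy)
  have hy_mem : y ∈ ball x (dist x y * 2) := by
    rw [mem_ball']
    linarith
  have hpow := inv_ofReal_pow_finrank_eq_mul_inv_addHaar_ball volume x hd
  rw [finrank_euclideanSpace_fin] at hpow
  rw [← dist_eq_norm, Real.rpow_natCast, hpow, mul_left_comm, ← div_eq_mul_inv]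
  gcongr
  exact volume_ball_div_le_hlMax_chiE (by positivity) hy_mem (ball_subset_ball_dist_mul_two hx hy)

theorem stmt19 (n : ℕ) (hn : 0 < n) :
    ∃ C : ℝ≥0∞, C < ⊤ ∧ ∀ (c : Euc n) (r : ℝ), 0 < r → ‖c‖ = 6 * r →
      ∀ x ∈ ball c r,
        ball c (2 * r) ⊆ ball x ((3 / 5) * ‖x‖) ∧
        ∀ y ∉ ball c (2 * r),
          volume (ball c r) * (ENNReal.ofReal (‖x - y‖ ^ (n : ℝ)))⁻¹ ≤
            C * hlMax n (chiE n c r) y :=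
  stmt19_general n
end
end
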